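/- Let q > 1, Δt > 0, a mesh size h > 0, an integer M_x ≥ 1, nonnegative symmetric summable weights (w_j)_{j≠0}, initial data u⁰ supported in {|i| ≤ M_x}, and let (uⁿ)_{n∈ℕ} be the solution of the fully discrete implicit scheme (FD). Then for every n ∈ ℕ, (4/(q q')) ∑_{i∈ℤ} h ((u^{n+1}_i)^{q/2} − (uⁿ_i)^{q/2})² / Δt² + (1/2) (‖u^{n+1}‖_X² − ‖uⁿ‖_X²)/Δt ≤ 0; in particular the sequence (‖uⁿ‖_X)_{n∈ℕ} is nonincreasing. -/

import Mathlib

/-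
Test the scheme against `u^{n+1} - u^n`. The time-difference term is bounded below site by site
through `(4 / (q q')) (a^{q/2} - b^{q/2})² ≤ (a^{q-1} - b^{q-1}) (a - b)`: both odd-power
differences are integrals of powers of `|t|` over `[b, a]`, and Cauchy–Schwarz controls the left
one by the right one. Symmetrising the double sum along `(i, j) ↦ (i - j, -j)` turns the Laplacian
term into the energy form `B(u^{n+1}, u^{n+1} - u^n) ≥ (‖u^{n+1}‖_X² - ‖u^n‖_X²) / 2`.
-/
open scoped BigOperators ENNReal

noncomputable def opow (x r : ℝ) : ℝ := |x| ^ (r - 1) * x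

noncomputable def discLap (w u : ℤ → ℝ) (i : ℤ) : ℝ :=
  ∑' j : ℤ, if j = 0 then 0 else w j * (u i - u (i - j))

noncomputable def lqNorm (h q : ℝ) (u : ℤ → ℝ) : ℝ :=
  (∑' i : ℤ, h * |u i| ^ q) ^ (1 / q)

noncomputable def energyNorm (h : ℝ) (w u : ℤ → ℝ) : ℝ :=
  Real.sqrt ((1 / 2) * ∑' i : ℤ, ∑' j : ℤ, if j = 0 then 0 else h * w j * (u i - u (i - j)) ^ 2)

/-- The fully discrete implicit scheme (FD). -/
def IsFD (q Δt : ℝ) (w : ℤ → ℝ) (Mx : ℤ) (u0 : ℤ → ℝ) (u : ℕ → ℤ → ℝ) : Prop :=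
  u 0 = u0 ∧
  (∀ n : ℕ, ∀ i : ℤ, Mx < |i| → u n i = 0) ∧
  (∀ n : ℕ, ∀ i : ℤ, |i| ≤ Mx →
    (opow (u (n + 1) i) (q - 1) - opow (u n i) (q - 1)) / Δt + discLap w (u (n + 1)) i = 0)

/-- A solution of the semi-discrete scheme (SD) with initial data `u0`. -/
def IsSD (q : ℝ) (w : ℤ → ℝ) (Mx : ℤ) (u0 : ℤ → ℝ) (v : ℤ → ℝ → ℝ) : Prop :=
  (∀ i : ℤ, ContinuousOn (v i) (Set.Ici 0)) ∧
  (∀ i : ℤ, Mx < |i| → ∀ t : ℝ, 0 ≤ t → v i t = 0) ∧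
  (∀ i : ℤ, v i 0 = u0 i) ∧
  (∀ i : ℤ, |i| ≤ Mx → ∀ t : ℝ, 0 ≤ t →
    opow (v i t) (q - 1) = opow (u0 i) (q - 1) - ∫ s in (0:ℝ)..t, discLap w (fun k => v k s) i)

/-- `C` satisfies the discrete Poincaré–Sobolev inequality for exponent `q`. -/
def PSConst (h q C : ℝ) (w : ℤ → ℝ) (Mx : ℤ) : Prop :=
  ∀ f : ℤ → ℝ, (∀ i : ℤ, Mx < |i| → f i = 0) → lqNorm h q f ≤ C * energyNorm h w f

open MeasureTheory intervalIntegral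

theorem sq_intervalIntegral_le_of_le {f : ℝ → ℝ} {a b : ℝ} (hab : a ≤ b)
    (hf : IntervalIntegrable f volume a b)
    (hf2 : IntervalIntegrable (fun t => f t ^ 2) volume a b) :
    (∫ t in a..b, f t) ^ 2 ≤ (b - a) * ∫ t in a..b, f t ^ 2 := by
  rcases hab.eq_or_lt with rfl | hab
  · simp
  set I := ∫ t in a..b, f t
  set m := I / (b - a)
  have hvar : 0 ≤ ∫ t in a..b, (f t - m) ^ 2 :=
    integral_nonneg hab.le fun t _ => sq_nonneg _
  have hexpand :
      ∫ t in a..b, (f t - m) ^ 2 = (∫ t in a..b, f t ^ 2) - 2 * m * I + (b - a) * m ^ 2 := by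
    have hsq : ∀ t, (f t - m) ^ 2 = f t ^ 2 - 2 * m * f t + m ^ 2 := fun t => by ring
    simp_rw [hsq]
    rw [integral_add (hf2.sub (hf.const_mul _)) intervalIntegrable_const,
      integral_sub hf2 (hf.const_mul _), intervalIntegral.integral_const_mul,
      intervalIntegral.integral_const, smul_eq_mul]
  have hba : 0 < b - a := sub_pos.2 hab
  rw [hexpand] at hvar
  have : I ^ 2 = (b - a) * (2 * m * I - (b - a) * m ^ 2) := by
    simp only [m]; field_simp; ring
  rw [this]
  exact mul_le_mul_of_nonneg_left (by linarith) hba.le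

theorem sq_intervalIntegral_le {f : ℝ → ℝ} {a b : ℝ}
    (hf : IntervalIntegrable f volume a b)
    (hf2 : IntervalIntegrable (fun t => f t ^ 2) volume a b) :
    (∫ t in a..b, f t) ^ 2 ≤ (b - a) * ∫ t in a..b, f t ^ 2 := by
  rcases le_total a b with hab | hba
  · exact sq_intervalIntegral_le_of_le hab hf hf2
  · have := sq_intervalIntegral_le_of_le hba hf.symm hf2.symm
    rw [integral_symm a b, integral_symm a b] at this
    linarith

theorem intervalIntegrable_abs_rpow {s : ℝ} (hs : -1 < s) (a b : ℝ) :
    IntervalIntegrable (fun t => |t| ^ s) volume a b := by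
  have hpos : ∀ c, 0 ≤ c → IntervalIntegrable (fun t => |t| ^ s) volume 0 c := fun c hc =>
    (intervalIntegrable_rpow' hs).congr fun t ht => by
      rw [Set.uIoc_of_le hc] at ht
      simp [abs_of_pos ht.1]
  have hall : ∀ c, IntervalIntegrable (fun t => |t| ^ s) volume 0 c := by
    intro c
    rcases le_total 0 c with hc | hc
    · exact hpos c hc
    · rw [IntervalIntegrable.iff_comp_neg]
      simpa using hpos (-c) (by linarith)
  exact (hall a).symm.trans (hall b)

theorem opow_eq_integral {r : ℝ} (hr : 0 < r) (x : ℝ) :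
    opow x r = r * ∫ t in (0 : ℝ)..x, |t| ^ (r - 1) := by
  have hpos : ∀ y, 0 ≤ y → r * ∫ t in (0 : ℝ)..y, |t| ^ (r - 1) = y ^ r := by
    intro y hy
    rw [integral_congr (g := fun t => t ^ (r - 1)) fun t ht => by
      rw [Set.uIcc_of_le hy] at ht; simp [abs_of_nonneg ht.1],
      integral_rpow (Or.inl (by linarith))]
    simp [Real.zero_rpow hr.ne']
    field_simp
  rcases le_total 0 x with hx | hx
  · rw [hpos x hx, opow, abs_of_nonneg hx, ← Real.rpow_add_one' hx (by linarith)]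
    simp
  · have hneg : opow x r = -(-x) ^ r := by
      have h := Real.rpow_add_one' (neg_nonneg.2 hx) (by linarith : r - 1 + 1 ≠ 0)
      rw [sub_add_cancel] at h
      rw [opow, abs_of_nonpos hx, h]
      ring
    calc opow x r = -(-x) ^ r := hneg
      _ = r * ∫ t in (0 : ℝ)..x, |-t| ^ (r - 1) := by
        rw [integral_comp_neg (fun t => |t| ^ (r - 1)), neg_zero, integral_symm, mul_neg,
          hpos (-x) (by linarith)]
      _ = r * ∫ t in (0 : ℝ)..x, |t| ^ (r - 1) := by simp_rw [abs_neg]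

theorem opow_sub_opow_eq_integral {r : ℝ} (hr : 0 < r) (x y : ℝ) :
    opow x r - opow y r = r * ∫ t in y..x, |t| ^ (r - 1) := by
  have hint := intervalIntegrable_abs_rpow (s := r - 1) (by linarith)
  rw [opow_eq_integral hr, opow_eq_integral hr, ← mul_sub,
    integral_interval_sub_left (hint 0 x) (hint 0 y)]

theorem opow_half_sub_sq_le {q : ℝ} (hq : 1 < q) (x y : ℝ) :
    4 * (q - 1) / q ^ 2 * (opow x (q / 2) - opow y (q / 2)) ^ 2
      ≤ (opow x (q - 1) - opow y (q - 1)) * (x - y) := by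
  have hsq : ∀ t : ℝ, (|t| ^ (q / 2 - 1)) ^ 2 = |t| ^ (q - 1 - 1) := fun t => by
    rw [← Real.rpow_natCast, ← Real.rpow_mul (abs_nonneg t)]
    ring_nf
  have hCS := sq_intervalIntegral_le (f := fun t => |t| ^ (q / 2 - 1)) (a := y) (b := x)
    (intervalIntegrable_abs_rpow (by linarith) y x)
    (by simpa only [hsq] using intervalIntegrable_abs_rpow (by linarith) y x)
  simp only [hsq] at hCS
  rw [opow_sub_opow_eq_integral (by linarith), opow_sub_opow_eq_integral (by linarith)]
  have hq0 : q ≠ 0 := by linarith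
  calc 4 * (q - 1) / q ^ 2 * (q / 2 * ∫ t in y..x, |t| ^ (q / 2 - 1)) ^ 2
      = (q - 1) * (∫ t in y..x, |t| ^ (q / 2 - 1)) ^ 2 := by field_simp; ring
    _ ≤ (q - 1) * ((x - y) * ∫ t in y..x, |t| ^ (q - 1 - 1)) :=
        mul_le_mul_of_nonneg_left hCS (by linarith)
    _ = _ := by ring

theorem discLap_eq_tsum (w u : ℤ → ℝ) (i : ℤ) :
    discLap w u i = ∑' j : ℤ, w j * (u i - u (i - j)) :=
  tsum_congr fun j => by split_ifs with hj <;> simp [hj]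

def lapTerm (w f g : ℤ → ℝ) (p : ℤ × ℤ) : ℝ :=
  w p.2 * (f p.1 - f (p.1 - p.2)) * g p.1

def energyTerm (w f g : ℤ → ℝ) (p : ℤ × ℤ) : ℝ :=
  w p.2 * (f p.1 - f (p.1 - p.2)) * (g p.1 - g (p.1 - p.2))

/-- The involution of `ℤ × ℤ` exchanging the endpoints `i` and `i - j` of the bond `(i, j)`. -/
def bondReverse : ℤ × ℤ ≃ ℤ × ℤ where
  toFun p := (p.1 - p.2, -p.2)
  invFun p := (p.1 - p.2, -p.2)
  left_inv p := by simp
  right_inv p := by simp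

section Lattice

variable {w f g : ℤ → ℝ}

theorem summable_lapTerm (hw0 : ∀ j, 0 ≤ w j) (hw : Summable w)
    (hf : Summable fun i => |f i|) (hg : Summable fun i => |g i|) :
    Summable (lapTerm w f g) := by
  set M := ∑' i, |f i|
  have hbound : ∀ p : ℤ × ℤ, ‖lapTerm w f g p‖ ≤ 2 * M * |g p.1| * w p.2 := by
    rintro ⟨i, j⟩
    have hdiff : |f i - f (i - j)| ≤ 2 * M := by
      have := hf.le_tsum i fun _ _ => abs_nonneg _
      have := hf.le_tsum (i - j) fun _ _ => abs_nonneg _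
      linarith [abs_sub (f i) (f (i - j))]
    rw [Real.norm_eq_abs, lapTerm, abs_mul, abs_mul, abs_of_nonneg (hw0 j)]
    nlinarith [abs_nonneg (g i), hw0 j, mul_le_mul_of_nonneg_right hdiff (abs_nonneg (g i))]
  refine .of_norm_bounded ?_ hbound
  have hM : 0 ≤ M := tsum_nonneg fun _ => abs_nonneg _
  exact (hg.mul_left (2 * M)).mul_of_nonneg hw (fun i => by positivity) hw0

theorem tsum_lapTerm (hw0 : ∀ j, 0 ≤ w j) (hw : Summable w)
    (hf : Summable fun i => |f i|) (hg : Summable fun i => |g i|) :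
    ∑' p, lapTerm w f g p = ∑' i, discLap w f i * g i := by
  rw [(summable_lapTerm hw0 hw hf hg).tsum_prod]
  congr 1 with i
  rw [discLap_eq_tsum, ← tsum_mul_right]
  rfl

theorem lapTerm_add_lapTerm_bondReverse (hwsym : ∀ j, w (-j) = w j) (p : ℤ × ℤ) :
    lapTerm w f g p + lapTerm w f g (bondReverse p) = energyTerm w f g p := by
  obtain ⟨i, j⟩ := p
  simp only [lapTerm, energyTerm, bondReverse, Equiv.coe_fn_mk, sub_neg_eq_add, sub_add_cancel,
    hwsym]
  ring

theorem summable_energyTerm (hw0 : ∀ j, 0 ≤ w j) (hwsym : ∀ j, w (-j) = w j) (hw : Summable w)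
    (hf : Summable fun i => |f i|) (hg : Summable fun i => |g i|) :
    Summable (energyTerm w f g) := by
  have h := summable_lapTerm hw0 hw hf hg
  exact (h.add (bondReverse.summable_iff.2 h)).congr (lapTerm_add_lapTerm_bondReverse hwsym)

theorem tsum_energyTerm (hw0 : ∀ j, 0 ≤ w j) (hwsym : ∀ j, w (-j) = w j) (hw : Summable w)
    (hf : Summable fun i => |f i|) (hg : Summable fun i => |g i|) :
    ∑' p, energyTerm w f g p = 2 * ∑' i, discLap w f i * g i := by
  have h := summable_lapTerm hw0 hw hf hg
  have h' : Summable fun p => lapTerm w f g (bondReverse p) := bondReverse.summable_iff.2 h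
  rw [← tsum_congr (lapTerm_add_lapTerm_bondReverse hwsym), h.tsum_add h',
    bondReverse.tsum_eq (lapTerm w f g), tsum_lapTerm hw0 hw hf hg, two_mul]

theorem energyNorm_sq {h : ℝ} (hh : 0 ≤ h) (hw0 : ∀ j, 0 ≤ w j) (hwsym : ∀ j, w (-j) = w j)
    (hw : Summable w) (hf : Summable fun i => |f i|) :
    energyNorm h w f ^ 2 = h / 2 * ∑' p, energyTerm w f f p := by
  have hinner : ∀ i j : ℤ, (if j = 0 then 0 else h * w j * (f i - f (i - j)) ^ 2)
      = h * energyTerm w f f (i, j) := fun i j => by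
    split_ifs with hj <;> simp [energyTerm, hj]; ring
  have hsum :
      (1 / 2) * ∑' i : ℤ, ∑' j : ℤ, (if j = 0 then 0 else h * w j * (f i - f (i - j)) ^ 2)
        = h / 2 * ∑' p, energyTerm w f f p := by
    simp_rw [hinner, tsum_mul_left, ← (summable_energyTerm hw0 hwsym hw hf hf).tsum_prod]
    ring
  have hnonneg : 0 ≤ h / 2 * ∑' p, energyTerm w f f p :=
    mul_nonneg (by positivity) (tsum_nonneg fun p => by
      simpa [energyTerm, mul_assoc] using mul_nonneg (hw0 p.2) (mul_self_nonneg _))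
  rw [energyNorm, hsum, Real.sq_sqrt hnonneg]

theorem energyTerm_sub_le (hw0 : ∀ j, 0 ≤ w j) (p : ℤ × ℤ) :
    energyTerm w f f p - energyTerm w g g p ≤ 2 * energyTerm w f (fun i => f i - g i) p := by
  have := mul_nonneg (hw0 p.2)
    (sq_nonneg (f p.1 - f (p.1 - p.2) - (g p.1 - g (p.1 - p.2))))
  simp only [energyTerm]
  nlinarith

theorem energyNorm_sq_sub_le {h : ℝ} (hh : 0 ≤ h) (hw0 : ∀ j, 0 ≤ w j)
    (hwsym : ∀ j, w (-j) = w j) (hw : Summable w)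
    (hf : Summable fun i => |f i|) (hg : Summable fun i => |g i|) :
    energyNorm h w f ^ 2 - energyNorm h w g ^ 2 ≤ 2 * h * ∑' i, discLap w f i * (f i - g i) := by
  have hfg : Summable fun i => |f i - g i| :=
    (hf.add hg).of_nonneg_of_le (fun _ => abs_nonneg _) fun i => abs_sub _ _
  have hff := summable_energyTerm hw0 hwsym hw hf hf
  have hgg := summable_energyTerm hw0 hwsym hw hg hg
  have hle := (hff.sub hgg).tsum_le_tsum (energyTerm_sub_le hw0)
    ((summable_energyTerm hw0 hwsym hw hf hfg).mul_left 2)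
  rw [hff.tsum_sub hgg, tsum_mul_left, tsum_energyTerm hw0 hwsym hw hf hfg] at hle
  rw [energyNorm_sq hh hw0 hwsym hw hf, energyNorm_sq hh hw0 hwsym hw hg]
  nlinarith

end Lattice

theorem implicit_step_dissipation {q Δt h : ℝ} {w : ℤ → ℝ} (hq : 1 < q) (hΔt : 0 < Δt)
    (hh : 0 ≤ h) (hw0 : ∀ j, 0 ≤ w j) (hwsym : ∀ j, w (-j) = w j) (hw : Summable w)
    {a b : ℤ → ℝ} (S : Finset ℤ) (ha : ∀ i ∉ S, a i = 0) (hb : ∀ i ∉ S, b i = 0)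
    (hstep : ∀ i ∈ S, (opow (a i) (q - 1) - opow (b i) (q - 1)) / Δt + discLap w a i = 0) :
    4 / (q * (q / (q - 1))) * (∑' i, h * (opow (a i) (q / 2) - opow (b i) (q / 2)) ^ 2) / Δt ^ 2
      + 1 / 2 * (energyNorm h w a ^ 2 - energyNorm h w b ^ 2) / Δt ≤ 0 := by
  set c := 4 * (q - 1) / q ^ 2
  have hsite : ∀ i, c * (h * (opow (a i) (q / 2) - opow (b i) (q / 2)) ^ 2)
      ≤ -(Δt * h) * (discLap w a i * (a i - b i)) := fun i => by
    by_cases hi : i ∈ S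
    · have hlap : discLap w a i = -((opow (a i) (q - 1) - opow (b i) (q - 1)) / Δt) := by
        linarith [hstep i hi]
      rw [hlap]
      field_simp
      nlinarith [opow_half_sub_sq_le hq (a i) (b i)]
    · simp [ha i hi, hb i hi, opow]
  have hfin : ∀ {f : ℤ → ℝ}, (∀ i ∉ S, f i = 0) → Summable fun i => |f i| := fun hf =>
    summable_of_ne_finset_zero (s := S) fun i hi => by simp [hf i hi]
  have hdiss : c * ∑' i, h * (opow (a i) (q / 2) - opow (b i) (q / 2)) ^ 2
      ≤ -(Δt * h) * ∑' i, discLap w a i * (a i - b i) := by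
    rw [← tsum_mul_left, ← tsum_mul_left]
    refine Summable.tsum_le_tsum hsite (summable_of_ne_finset_zero (s := S) fun i hi => ?_)
      (summable_of_ne_finset_zero (s := S) fun i hi => ?_) <;> simp [ha i hi, hb i hi, opow]
  have hconv := energyNorm_sq_sub_le hh hw0 hwsym hw (hfin ha) (hfin hb)
  have hc : 4 / (q * (q / (q - 1))) = c := by
    have : q - 1 ≠ 0 := by linarith
    simp only [c]
    field_simp
  rw [hc]
  calc _ = (c * ∑' i, h * (opow (a i) (q / 2) - opow (b i) (q / 2)) ^ 2
        + Δt * (1 / 2 * (energyNorm h w a ^ 2 - energyNorm h w b ^ 2))) / Δt ^ 2 := by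
        field_simp
    _ ≤ 0 := div_nonpos_of_nonpos_of_nonneg
        (by nlinarith [mul_le_mul_of_nonneg_left hconv hΔt.le]) (sq_nonneg _)

theorem stmt10_general (q Δt h : ℝ) (hq : 1 < q) (hΔt : 0 < Δt) (hh : 0 < h)
    (Mx : ℤ)
    (w : ℤ → ℝ) (hw0 : ∀ j : ℤ, 0 ≤ w j) (hwsym : ∀ j : ℤ, w (-j) = w j) (hwsum : Summable w)
    (u0 : ℤ → ℝ)
    (u : ℕ → ℤ → ℝ) (hu : IsFD q Δt w Mx u0 u) :
    (∀ n : ℕ,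
      (4 / (q * (q / (q - 1)))) *
          (∑' i : ℤ, h * (opow (u (n + 1) i) (q / 2) - opow (u n i) (q / 2)) ^ 2) / Δt ^ 2 +
        (1 / 2) * ((energyNorm h w (u (n + 1))) ^ 2 - (energyNorm h w (u n)) ^ 2) / Δt ≤ 0) ∧
    Antitone fun n : ℕ => energyNorm h w (u n) := by
  obtain ⟨-, hsupp, hscheme⟩ := hu
  have hS : ∀ i, i ∉ Finset.Icc (-Mx) Mx ↔ Mx < |i| := fun i => by
    simp [Finset.mem_Icc, ← abs_le]
  have hdiss := fun n => implicit_step_dissipation hq hΔt hh.le hw0 hwsym hwsum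
    (Finset.Icc (-Mx) Mx) (fun i hi => hsupp (n + 1) i ((hS i).1 hi))
    (fun i hi => hsupp n i ((hS i).1 hi))
    (fun i hi => hscheme n i (not_lt.1 fun hlt => (hS i).2 hlt hi))
  refine ⟨hdiss, antitone_nat_of_succ_le fun n => ?_⟩
  have hP : 0 ≤ 4 / (q * (q / (q - 1))) *
      (∑' i, h * (opow (u (n + 1) i) (q / 2) - opow (u n i) (q / 2)) ^ 2) / Δt ^ 2 := by
    have : 0 < q - 1 := by linarith
    have : 0 < q := by linarith
    exact div_nonneg (mul_nonneg (by positivity) (tsum_nonneg fun i => by positivity))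
      (sq_nonneg _)
  have hsq : energyNorm h w (u (n + 1)) ^ 2 ≤ energyNorm h w (u n) ^ 2 := by
    by_contra hlt
    have : 0 < 1 / 2 * (energyNorm h w (u (n + 1)) ^ 2 - energyNorm h w (u n) ^ 2) / Δt :=
      div_pos (by linarith) hΔt
    linarith [hdiss n]
  exact (sq_le_sq₀ (Real.sqrt_nonneg _) (Real.sqrt_nonneg _)).1 hsq

theorem stmt10 (q Δt h : ℝ) (hq : 1 < q) (hΔt : 0 < Δt) (hh : 0 < h)
    (Mx : ℤ) (hMx : 1 ≤ Mx)
    (w : ℤ → ℝ) (hw0 : ∀ j : ℤ, 0 ≤ w j) (hwsym : ∀ j : ℤ, w (-j) = w j) (hwsum : Summable w)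
    (u0 : ℤ → ℝ) (hu0 : ∀ i : ℤ, Mx < |i| → u0 i = 0)
    (u : ℕ → ℤ → ℝ) (hu : IsFD q Δt w Mx u0 u) :
    (∀ n : ℕ,
      (4 / (q * (q / (q - 1)))) *
          (∑' i : ℤ, h * (opow (u (n + 1) i) (q / 2) - opow (u n i) (q / 2)) ^ 2) / Δt ^ 2 +
        (1 / 2) * ((energyNorm h w (u (n + 1))) ^ 2 - (energyNorm h w (u n)) ^ 2) / Δt ≤ 0) ∧
    Antitone fun n : ℕ => energyNorm h w (u n) :=
  stmt10_general q Δt h hq hΔt hh Mx w hw0 hwsym hwsum u0 u hu
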